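/- Under the hypotheses of the previous statement (Algorithm 1 construction with U, Ũ, R, A, Q, V, Σ), the curve γ(t) = (UV cos(tΣ) + Q sin(tΣ))Vᵀ exp_m(tA) on [0,1] has constant canonical speed, and its length with respect to the canonical metric equals L(γ) = (½·tr(AᵀA) + tr(Σ²))^{1/2}. -/

import Mathlib

open Matrix NormedSpace
attribute [local instance] Matrix.frobeniusNormedAddCommGroup Matrix.frobeniusNormedSpace


noncomputable def algOneQG (n p : ℕ) (U Q : Matrix (Fin n) (Fin p) ℝ)
    (Sg V A : Matrix (Fin p) (Fin p) ℝ) (t : ℝ) : Matrix (Fin n) (Fin p) ℝ :=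
  (U * V * Matrix.diagonal (fun i => Real.cos (t * Sg i i)) +
    Q * Matrix.diagonal (fun i => Real.sin (t * Sg i i))) * Vᵀ * exp (t • A)

noncomputable def diagCLM (p : ℕ) : (Fin p → ℝ) →L[ℝ] Matrix (Fin p) (Fin p) ℝ :=
  LinearMap.toContinuousLinearMap
    { toFun := Matrix.diagonal
      map_add' := fun f g => (Matrix.diagonal_add f g).symm
      map_smul' := fun c f => Matrix.diagonal_smul c f }

noncomputable def lmulCLM {n p : ℕ} (B : Matrix (Fin n) (Fin p) ℝ) :
    Matrix (Fin p) (Fin p) ℝ →L[ℝ] Matrix (Fin n) (Fin p) ℝ :=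
  LinearMap.toContinuousLinearMap
    { toFun := fun X => B * X
      map_add' := fun _ _ => Matrix.mul_add _ _ _
      map_smul' := fun _ _ => Matrix.mul_smul _ _ _ }

lemma hasDerivAt_algOneQG (n p : ℕ) (U Q : Matrix (Fin n) (Fin p) ℝ)
    (Sg V A : Matrix (Fin p) (Fin p) ℝ) (t : ℝ) :
    HasDerivAt (algOneQG n p U Q Sg V A)
      ((U * V * Matrix.diagonal (fun i => -Real.sin (t * Sg i i) * Sg i i) +
          Q * Matrix.diagonal (fun i => Real.cos (t * Sg i i) * Sg i i)) * Vᵀ * exp (t • A) +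
        (U * V * Matrix.diagonal (fun i => Real.cos (t * Sg i i)) +
          Q * Matrix.diagonal (fun i => Real.sin (t * Sg i i))) * Vᵀ *
            (exp (t • A) * A)) t := by
  letI : NormedRing (Matrix (Fin p) (Fin p) ℝ) := Matrix.frobeniusNormedRing
  letI : NormedAlgebra ℝ (Matrix (Fin p) (Fin p) ℝ) := Matrix.frobeniusNormedAlgebra
  have hC : HasDerivAt (fun t => Matrix.diagonal (fun i => Real.cos (t * Sg i i)))
      (Matrix.diagonal (fun i => -Real.sin (t * Sg i i) * Sg i i)) t :=
    (diagCLM p).hasFDerivAt.comp_hasDerivAt t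
      (hasDerivAt_pi.2 fun i => (hasDerivAt_mul_const (Sg i i)).cos)
  have hS : HasDerivAt (fun t => Matrix.diagonal (fun i => Real.sin (t * Sg i i)))
      (Matrix.diagonal (fun i => Real.cos (t * Sg i i) * Sg i i)) t :=
    (diagCLM p).hasFDerivAt.comp_hasDerivAt t
      (hasDerivAt_pi.2 fun i => (hasDerivAt_mul_const (Sg i i)).sin)
  have hE : HasDerivAt (fun u : ℝ => exp (u • A)) (exp (t • A) * A) t :=
    hasDerivAt_exp_smul_const (𝕂 := ℝ) A t
  have h1 := (lmulCLM (U * V)).hasFDerivAt.comp_hasDerivAt t ((hC.mul_const Vᵀ).mul hE)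
  have h2 := (lmulCLM Q).hasFDerivAt.comp_hasDerivAt t ((hS.mul_const Vᵀ).mul hE)
  have h3 := h1.add h2
  have hfun : (fun t => lmulCLM (U * V)
        ((Matrix.diagonal (fun i => Real.cos (t * Sg i i)) * Vᵀ) * exp (t • A)) +
      lmulCLM Q ((Matrix.diagonal (fun i => Real.sin (t * Sg i i)) * Vᵀ) * exp (t • A))) =
      algOneQG n p U Q Sg V A := by
    funext x
    show U * V * (Matrix.diagonal (fun i => Real.cos (x * Sg i i)) * Vᵀ * exp (x • A)) +
        Q * (Matrix.diagonal (fun i => Real.sin (x * Sg i i)) * Vᵀ * exp (x • A)) = _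
    simp only [algOneQG, Matrix.add_mul, Matrix.mul_assoc]
  have h4 : HasDerivAt (fun t => lmulCLM (U * V)
        ((Matrix.diagonal (fun i => Real.cos (t * Sg i i)) * Vᵀ) * exp (t • A)) +
      lmulCLM Q ((Matrix.diagonal (fun i => Real.sin (t * Sg i i)) * Vᵀ) * exp (t • A)))
      ((lmulCLM (U * V))
        ((Matrix.diagonal fun i => -Real.sin (t * Sg i i) * Sg i i) * Vᵀ * exp (t • A) +
          (Matrix.diagonal fun i => Real.cos (t * Sg i i)) * Vᵀ * (exp (t • A) * A)) +
      (lmulCLM Q)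
        ((Matrix.diagonal fun i => Real.cos (t * Sg i i) * Sg i i) * Vᵀ * exp (t • A) +
          (Matrix.diagonal fun i => Real.sin (t * Sg i i)) * Vᵀ * (exp (t • A) * A))) t := h3
  rw [hfun] at h4
  convert h4 using 1
  show _ = U * V * (_ + _) + Q * (_ + _)
  erw [Matrix.mul_add (U * V), Matrix.mul_add Q]
  simp only [Matrix.mul_add, Matrix.add_mul, Matrix.mul_assoc]
  abel


lemma speed_eq (n p : ℕ) (U Q : Matrix (Fin n) (Fin p) ℝ)
    (Sg V A : Matrix (Fin p) (Fin p) ℝ)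
    (hU : Uᵀ * U = 1) (hA : Aᵀ = -A)
    (hQ : Qᵀ * Q = 1) (hUQ : Uᵀ * Q = 0)
    (hV₁ : Vᵀ * V = 1) (hV₂ : V * Vᵀ = 1)
    (hSgdiag : Sg.IsDiag) (t : ℝ)
    (G D : Matrix (Fin n) (Fin p) ℝ)
    (hGdef : G = (U * V * Matrix.diagonal (fun i => Real.cos (t * Sg i i)) +
        Q * Matrix.diagonal (fun i => Real.sin (t * Sg i i))) * Vᵀ * exp (t • A))
    (hDdef : D = (U * V * Matrix.diagonal (fun i => -Real.sin (t * Sg i i) * Sg i i) +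
          Q * Matrix.diagonal (fun i => Real.cos (t * Sg i i) * Sg i i)) * Vᵀ * exp (t • A) +
        (U * V * Matrix.diagonal (fun i => Real.cos (t * Sg i i)) +
          Q * Matrix.diagonal (fun i => Real.sin (t * Sg i i))) * Vᵀ * (exp (t • A) * A)) :
    trace (Dᵀ * ((1 : Matrix (Fin n) (Fin n) ℝ) - (1 / 2 : ℝ) • (G * Gᵀ)) * D) =
      (1 / 2 : ℝ) * trace (Aᵀ * A) + trace (Sg ^ 2) := by
  set c : Fin p → ℝ := fun i => Real.cos (t * Sg i i) with hc
  set s : Fin p → ℝ := fun i => Real.sin (t * Sg i i) with hs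
  set C : Matrix (Fin p) (Fin p) ℝ := Matrix.diagonal c with hCdef
  set S : Matrix (Fin p) (Fin p) ℝ := Matrix.diagonal s with hSdef
  set C' : Matrix (Fin p) (Fin p) ℝ := Matrix.diagonal (fun i => -s i * Sg i i) with hC'def
  set S' : Matrix (Fin p) (Fin p) ℝ := Matrix.diagonal (fun i => c i * Sg i i) with hS'def
  set E : Matrix (Fin p) (Fin p) ℝ := exp (t • A) with hEdef
  set M : Matrix (Fin n) (Fin p) ℝ := U * V * C + Q * S with hMdef
  set N : Matrix (Fin n) (Fin p) ℝ := U * V * C' + Q * S' with hNdef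
  -- basic facts
  have hQU : Qᵀ * U = 0 := by
    have := congrArg Matrix.transpose hUQ
    simpa [Matrix.transpose_mul] using this
  have hE1 : Eᵀ * E = 1 := by
    rw [hEdef, ← Matrix.exp_transpose, Matrix.transpose_smul, hA, smul_neg,
      ← Matrix.exp_add_of_commute _ _ ((Commute.refl (t • A)).neg_left), neg_add_cancel,
      exp_zero]
  have hE2 : E * Eᵀ = 1 := by
    rw [hEdef, ← Matrix.exp_transpose, Matrix.transpose_smul, hA, smul_neg,
      ← Matrix.exp_add_of_commute _ _ ((Commute.refl (t • A)).neg_right), add_neg_cancel,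
      exp_zero]
  have hcs : ∀ i, c i * c i + s i * s i = 1 := by
    intro i
    have := Real.sin_sq_add_cos_sq (t * Sg i i)
    simp only [hc, hs]; nlinarith [this]
  -- applied forms
  have hU' : ∀ X : Matrix (Fin p) (Fin p) ℝ, Uᵀ * (U * X) = X := fun X => by
    rw [← Matrix.mul_assoc, hU, Matrix.one_mul]
  have hUQ' : ∀ X : Matrix (Fin p) (Fin p) ℝ, Uᵀ * (Q * X) = 0 := fun X => by
    rw [← Matrix.mul_assoc, hUQ, Matrix.zero_mul]
  have hQU' : ∀ X : Matrix (Fin p) (Fin p) ℝ, Qᵀ * (U * X) = 0 := fun X => by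
    rw [← Matrix.mul_assoc, hQU, Matrix.zero_mul]
  have hQ' : ∀ X : Matrix (Fin p) (Fin p) ℝ, Qᵀ * (Q * X) = X := fun X => by
    rw [← Matrix.mul_assoc, hQ, Matrix.one_mul]
  have hV₁' : ∀ X : Matrix (Fin p) (Fin p) ℝ, Vᵀ * (V * X) = X := fun X => by
    rw [← Matrix.mul_assoc, hV₁, Matrix.one_mul]
  have hV₂' : ∀ X : Matrix (Fin p) (Fin p) ℝ, V * (Vᵀ * X) = X := fun X => by
    rw [← Matrix.mul_assoc, hV₂, Matrix.one_mul]
  have hE1' : ∀ X : Matrix (Fin p) (Fin p) ℝ, Eᵀ * (E * X) = X := fun X => by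
    rw [← Matrix.mul_assoc, hE1, Matrix.one_mul]
  have hE2' : ∀ X : Matrix (Fin p) (Fin p) ℝ, E * (Eᵀ * X) = X := fun X => by
    rw [← Matrix.mul_assoc, hE2, Matrix.one_mul]
  -- M,N identities
  have hMM : Mᵀ * M = 1 := by
    simp only [hMdef, hCdef, hSdef, Matrix.transpose_add, Matrix.transpose_mul,
      Matrix.diagonal_transpose, Matrix.add_mul, Matrix.mul_add, Matrix.mul_assoc,
      hU', hUQ', hQU', hQ', hV₁', Matrix.mul_zero, Matrix.zero_mul, add_zero, zero_add,
      Matrix.diagonal_mul_diagonal]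
    rw [Matrix.diagonal_add, ← Matrix.diagonal_one]
    exact congrArg _ (funext hcs)
  have hMN : Mᵀ * N = 0 := by
    simp only [hMdef, hNdef, hCdef, hSdef, hC'def, hS'def, Matrix.transpose_add,
      Matrix.transpose_mul, Matrix.diagonal_transpose, Matrix.add_mul, Matrix.mul_add,
      Matrix.mul_assoc, hU', hUQ', hQU', hQ', hV₁', Matrix.mul_zero, Matrix.zero_mul,
      add_zero, zero_add, Matrix.diagonal_mul_diagonal]
    rw [Matrix.diagonal_add, ← Matrix.diagonal_zero]
    refine congrArg _ (funext fun i => by ring)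
  have hNM : Nᵀ * M = 0 := by
    have := congrArg Matrix.transpose hMN
    simpa [Matrix.transpose_mul] using this
  have hNN : Nᵀ * N = Matrix.diagonal (fun i => Sg i i * Sg i i) := by
    simp only [hNdef, hC'def, hS'def, Matrix.transpose_add, Matrix.transpose_mul,
      Matrix.diagonal_transpose, Matrix.add_mul, Matrix.mul_add, Matrix.mul_assoc,
      hU', hUQ', hQU', hQ', hV₁', Matrix.mul_zero, Matrix.zero_mul, add_zero, zero_add,
      Matrix.diagonal_mul_diagonal]
    rw [Matrix.diagonal_add]
    refine congrArg _ (funext fun i => ?_)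
    have := hcs i; nlinarith [this]
  have hMM' : ∀ X : Matrix (Fin p) (Fin p) ℝ, Mᵀ * (M * X) = X := fun X => by
    rw [← Matrix.mul_assoc, hMM, Matrix.one_mul]
  have hMN' : ∀ X : Matrix (Fin p) (Fin p) ℝ, Mᵀ * (N * X) = 0 := fun X => by
    rw [← Matrix.mul_assoc, hMN, Matrix.zero_mul]
  have hNM' : ∀ X : Matrix (Fin p) (Fin p) ℝ, Nᵀ * (M * X) = 0 := fun X => by
    rw [← Matrix.mul_assoc, hNM, Matrix.zero_mul]
  -- gamma identities
  have hGM : G = M * (Vᵀ * E) := by rw [hGdef, hMdef, Matrix.mul_assoc]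
  have hDM : D = N * (Vᵀ * E) + M * (Vᵀ * (E * A)) := by
    rw [hDdef, hMdef, hNdef]; simp only [Matrix.mul_assoc]
  have hGG : Gᵀ * G = 1 := by
    rw [hGM]
    simp only [Matrix.transpose_mul, Matrix.transpose_transpose, Matrix.mul_assoc, hMM', hV₂',
      hE1', hE1]
  have hGD : Gᵀ * D = A := by
    rw [hGM, hDM]
    simp only [Matrix.mul_add, Matrix.transpose_mul, Matrix.transpose_transpose,
      Matrix.mul_assoc, hMM', hMN', hV₂', hE1', Matrix.mul_zero, zero_add]
  have hDG : Dᵀ * G = Aᵀ := by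
    have := congrArg Matrix.transpose hGD
    simpa [Matrix.transpose_mul] using this
  have hDD : trace (Dᵀ * D) = trace (Matrix.diagonal (fun i => Sg i i * Sg i i)) +
      trace (Aᵀ * A) := by
    rw [hDM]
    simp only [Matrix.transpose_add, Matrix.transpose_mul, Matrix.transpose_transpose,
      Matrix.add_mul, Matrix.mul_add, Matrix.mul_assoc, hMM', hMN', hNM', hV₂', hE1',
      Matrix.mul_zero, Matrix.zero_mul, add_zero, zero_add]
    rw [trace_add]
    congr 1
    rw [← Matrix.mul_assoc Nᵀ N, hNN]
    calc trace (Eᵀ * (V * (Matrix.diagonal (fun i => Sg i i * Sg i i) * (Vᵀ * E))))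
        = trace ((V * (Matrix.diagonal (fun i => Sg i i * Sg i i) * (Vᵀ * E))) * Eᵀ) :=
          Matrix.trace_mul_comm _ _
      _ = trace (V * (Matrix.diagonal (fun i => Sg i i * Sg i i) * (Vᵀ * (E * Eᵀ)))) := by
          simp only [Matrix.mul_assoc]
      _ = trace (V * (Matrix.diagonal (fun i => Sg i i * Sg i i) * Vᵀ)) := by
          rw [hE2, Matrix.mul_one]
      _ = trace ((Matrix.diagonal (fun i => Sg i i * Sg i i) * Vᵀ) * V) :=
          Matrix.trace_mul_comm _ _
      _ = trace (Matrix.diagonal (fun i => Sg i i * Sg i i)) := by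
          rw [Matrix.mul_assoc, hV₁, Matrix.mul_one]
  -- main computation
  have expand : Dᵀ * ((1 : Matrix (Fin n) (Fin n) ℝ) - (1 / 2 : ℝ) • (G * Gᵀ)) * D =
      Dᵀ * D - (1 / 2 : ℝ) • ((Dᵀ * G) * (Gᵀ * D)) := by
    rw [Matrix.mul_sub, Matrix.mul_one, Matrix.sub_mul, Matrix.mul_smul, Matrix.smul_mul]
    congr 2
    simp only [Matrix.mul_assoc]
  rw [expand, trace_sub, trace_smul, hDD, hDG, hGD]
  have htr : trace (Matrix.diagonal fun i => Sg i i * Sg i i) = trace (Sg ^ 2) := by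
    conv_rhs => rw [sq, ← hSgdiag.diagonal_diag]
    rw [Matrix.diagonal_mul_diagonal]
    rfl
  rw [htr]
  simp only [smul_eq_mul]
  ring

/-- the Algorithm-1 quasi-geodesic has constant canonical speed and its
length w.r.t. the canonical metric is `(½ tr(AᵀA) + tr(Σ²))^(1/2)`. -/
theorem stmt11 (n p : ℕ) (U Utilde : Matrix (Fin n) (Fin p) ℝ)
    (R A : Matrix (Fin p) (Fin p) ℝ)
    (Q : Matrix (Fin n) (Fin p) ℝ) (Sg V : Matrix (Fin p) (Fin p) ℝ)
    (hU : Uᵀ * U = 1) (hUt : Utildeᵀ * Utilde = 1)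
    (hR₁ : Rᵀ * R = 1) (hR₂ : R * Rᵀ = 1)
    (hA : Aᵀ = -A) (hAR : exp A = Rᵀ)
    (hQ : Qᵀ * Q = 1) (hUQ : Uᵀ * Q = 0)
    (hV₁ : Vᵀ * V = 1) (hV₂ : V * Vᵀ = 1)
    (hSgdiag : Sg.IsDiag)
    (hcos : Uᵀ * (Utilde * R) = V * Matrix.diagonal (fun i => Real.cos (Sg i i)) * Vᵀ)
    (hsin : ((1 : Matrix (Fin n) (Fin n) ℝ) - U * Uᵀ) * (Utilde * R) =
      Q * Matrix.diagonal (fun i => Real.sin (Sg i i)) * Vᵀ) :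
    (∀ s t : ℝ,
      trace ((deriv (algOneQG n p U Q Sg V A) s)ᵀ *
          ((1 : Matrix (Fin n) (Fin n) ℝ) -
            (1 / 2 : ℝ) • (algOneQG n p U Q Sg V A s * (algOneQG n p U Q Sg V A s)ᵀ)) *
          deriv (algOneQG n p U Q Sg V A) s) =
        trace ((deriv (algOneQG n p U Q Sg V A) t)ᵀ *
          ((1 : Matrix (Fin n) (Fin n) ℝ) -
            (1 / 2 : ℝ) • (algOneQG n p U Q Sg V A t * (algOneQG n p U Q Sg V A t)ᵀ)) *
          deriv (algOneQG n p U Q Sg V A) t)) ∧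
    (∫ t in (0 : ℝ)..1,
        Real.sqrt (trace ((deriv (algOneQG n p U Q Sg V A) t)ᵀ *
          ((1 : Matrix (Fin n) (Fin n) ℝ) -
            (1 / 2 : ℝ) • (algOneQG n p U Q Sg V A t * (algOneQG n p U Q Sg V A t)ᵀ)) *
          deriv (algOneQG n p U Q Sg V A) t))) =
      Real.sqrt ((1 / 2 : ℝ) * trace (Aᵀ * A) + trace (Sg ^ 2)) := by
  have hd := fun u : ℝ => (hasDerivAt_algOneQG n p U Q Sg V A u).deriv
  have key : ∀ u : ℝ,
      trace ((deriv (algOneQG n p U Q Sg V A) u)ᵀ *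
          ((1 : Matrix (Fin n) (Fin n) ℝ) -
            (1 / 2 : ℝ) • (algOneQG n p U Q Sg V A u * (algOneQG n p U Q Sg V A u)ᵀ)) *
          deriv (algOneQG n p U Q Sg V A) u) =
        (1 / 2 : ℝ) * trace (Aᵀ * A) + trace (Sg ^ 2) := by
    intro u
    erw [hd u]
    exact speed_eq n p U Q Sg V A hU hA hQ hUQ hV₁ hV₂ hSgdiag u _ _ rfl rfl
  constructor
  · intro s t
    rw [key s, key t]
  · simp only [key]
    rw [intervalIntegral.integral_const]
    simp
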